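/- With the above setup, π D̄ D♯_{Q̄} = π D̃ D♯_{Q̃}, where π = (1/2)ϑ(I_p ⊗ 1₂ᵀ) is the common stationary distribution. -/

import Mathlib

open Matrix MeasureTheory

/-- `Q` is a generator matrix of a finite CTMC: nonnegative off-diagonal entries
and zero row sums. -/
def IsGenerator {n : Type*} [Fintype n] (Q : Matrix n n ℝ) : Prop :=
  (∀ i j, i ≠ j → 0 ≤ Q i j) ∧ ∀ i, ∑ j, Q i j = 0

/-- Irreducibility of the CTMC with generator `Q`: the transition matrix `e^Q`
is entrywise positive. -/
def IsIrreducibleGen {n : Type*} [Fintype n] [DecidableEq n] (Q : Matrix n n ℝ) : Prop :=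
  ∀ i j, 0 < NormedSpace.exp Q i j

/-- `π` is a stationary distribution of the generator `Q`: `πQ = 0`, `π1 = 1`. -/
def IsStationaryDist {n : Type*} [Fintype n] (Q : Matrix n n ℝ) (π : n → ℝ) : Prop :=
  (∀ i, 0 ≤ π i) ∧ (∑ i, π i = 1) ∧ π ᵥ* Q = 0

/-- The rank-one matrix `1π`. -/
def onePi {n : Type*} (π : n → ℝ) : Matrix n n ℝ :=
  Matrix.of fun _ j => π j

/-- `Ds` is the deviation matrix `D♯ = ∫₀^∞ (e^{Qu} − 1π) du` of `Q`
(entrywise convergent integral). -/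
def IsDeviation {n : Type*} [Fintype n] [DecidableEq n] (Q : Matrix n n ℝ) (π : n → ℝ)
    (Ds : Matrix n n ℝ) : Prop :=
  ∀ i j, IntegrableOn (fun u => NormedSpace.exp (u • Q) i j - π j) (Set.Ioi (0:ℝ)) MeasureTheory.volume ∧
    Ds i j = ∫ u in Set.Ioi (0:ℝ), (NormedSpace.exp (u • Q) i j - π j)

/-- `Dt` is the transient deviation matrix `D♯(t) = ∫₀^t (e^{Qu} − 1π) du` of `Q`. -/
def IsTransientDeviation {n : Type*} [Fintype n] [DecidableEq n] (Q : Matrix n n ℝ) (π : n → ℝ)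
    (Dt : ℝ → Matrix n n ℝ) : Prop :=
  ∀ t i j, Dt t i j = ∫ u in Set.Ioc (0:ℝ) t, (NormedSpace.exp (u • Q) i j - π j)

/-- The `p × 2p` matrix `I_p ⊗ 1₂ᵀ`, where the `2p` index set is `Fin p × Fin 2`. -/
def kronA (p : ℕ) : Matrix (Fin p) (Fin p × Fin 2) ℝ :=
  Matrix.of fun i jk => if jk.1 = i then 1 else 0

/-- The slowness condition `λ_i > S_i = ∑_{j≠i} q_{ij} = -G i i` for a generator `G`. -/
def IsSlow {p : ℕ} (G : Matrix (Fin p) (Fin p) ℝ) (lam : Fin p → ℝ) : Prop :=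
  ∀ i, -G i i < lam i

/-- The `2p × 2p` generator `Q̄` of the MTCP associated with a slow MMPP with
modulating generator `G` and rates `λ`: diagonal `2×2` blocks
`[[−λ_i, λ_i − S_i],[λ_i − S_i, −λ_i]]` (note `λ_i − S_i = λ_i + G i i`) and
off-diagonal blocks `q_{ij} I₂`. -/
def Qbar {p : ℕ} (G : Matrix (Fin p) (Fin p) ℝ) (lam : Fin p → ℝ) :
    Matrix (Fin p × Fin 2) (Fin p × Fin 2) ℝ :=
  Matrix.of fun ik jl =>
    if ik.1 = jl.1 then (if ik.2 = jl.2 then -lam ik.1 else lam ik.1 + G ik.1 ik.1)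
    else (if ik.2 = jl.2 then G ik.1 jl.1 else 0)

/-- The `2p × 2p` generator `Q̃` of the coupled MAP built from the MMPP: diagonal
blocks `[[−(λ_i + S_i), λ_i],[λ_i, −(λ_i + S_i)]]` (note `−(λ_i+S_i) = G i i − λ_i`)
and off-diagonal blocks `q_{ij} I₂`. -/
def Qtil {p : ℕ} (G : Matrix (Fin p) (Fin p) ℝ) (lam : Fin p → ℝ) :
    Matrix (Fin p × Fin 2) (Fin p × Fin 2) ℝ :=
  Matrix.of fun ik jl =>
    if ik.1 = jl.1 then (if ik.2 = jl.2 then G ik.1 ik.1 - lam ik.1 else lam ik.1)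
    else (if ik.2 = jl.2 then G ik.1 jl.1 else 0)

/-- The event-intensity matrix `D̄ = Q̄ − diag(Q̄)` of the associated MTCP. -/
def Dbar {p : ℕ} (G : Matrix (Fin p) (Fin p) ℝ) (lam : Fin p → ℝ) :
    Matrix (Fin p × Fin 2) (Fin p × Fin 2) ℝ :=
  Qbar G lam - Matrix.diagonal fun ik => Qbar G lam ik ik

/-- The event-intensity matrix `D̃` of the coupled MMPP: block diagonal with
blocks `[[0, λ_i],[λ_i, 0]]`. -/
def Dtil {p : ℕ} (lam : Fin p → ℝ) : Matrix (Fin p × Fin 2) (Fin p × Fin 2) ℝ :=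
  Matrix.of fun ik jl => if ik.1 = jl.1 ∧ ik.2 ≠ jl.2 then lam ik.1 else 0

/-- The common stationary distribution `π = (1/2) ϑ (I_p ⊗ 1₂ᵀ)` of `Q̄` and `Q̃`. -/
noncomputable def piHat {p : ℕ} (θ : Fin p → ℝ) : Fin p × Fin 2 → ℝ :=
  (1/2 : ℝ) • (θ ᵥ* kronA p)


/-! Both `Q̄` and `Q̃` lump to `G` under `A = I_p ⊗ 1₂ᵀ`: `A Q̄ = G A = A Q̃`, hence
`A e^{uQ̄} = e^{uG} A = A e^{uQ̃}`, and integrating against the common `π` gives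
`A D♯_{Q̄} = A D♯_{Q̃}`. On the other side, `π D̄ = π D̃ = (1/2)(ϑ ⊙ λ) A`: for `D̃` this is a
direct computation, and for `D̄ = Q̄ − diag Q̄` it follows from `π Q̄ = 0`. -/

open scoped Matrix.Norms.Operator in
theorem Matrix.mul_exp_eq_exp_mul_of_mul_eq {𝕂 m n : Type*} [RCLike 𝕂] [Fintype m] [Fintype n]
    [DecidableEq m] [DecidableEq n] {A : Matrix m n 𝕂} {G : Matrix m m 𝕂} {Q : Matrix n n 𝕂}
    (h : A * Q = G * A) : A * NormedSpace.exp Q = NormedSpace.exp G * A := by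
  have hpow (k : ℕ) : A * Q ^ k = G ^ k * A := by
    induction k with
    | zero => simp
    | succ k ih => rw [pow_succ, pow_succ, ← Matrix.mul_assoc, ih, Matrix.mul_assoc, h,
        Matrix.mul_assoc]
  let mulA := LinearMap.toContinuousLinearMap (mulLeftLinearMap n 𝕂 A)
  let mulA' := LinearMap.toContinuousLinearMap (mulRightLinearMap m 𝕂 A)
  calc A * NormedSpace.exp Q = mulA (NormedSpace.exp Q) := rfl
    _ = mulA' (NormedSpace.exp G) := by
      rw [NormedSpace.exp_eq_tsum 𝕂, NormedSpace.exp_eq_tsum 𝕂,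
        mulA.map_tsum (NormedSpace.expSeries_summable' Q),
        mulA'.map_tsum (NormedSpace.expSeries_summable' G)]
      simp [mulA, mulA', hpow]
    _ = NormedSpace.exp G * A := rfl

section Deviation

variable {m n : Type*} [Fintype n] [DecidableEq n]

theorem IsDeviation.mul_apply {Q Ds : Matrix n n ℝ} {π : n → ℝ} (hDs : IsDeviation Q π Ds)
    (A : Matrix m n ℝ) (i : m) (j : n) :
    (A * Ds) i j =
      ∫ u in Set.Ioi (0 : ℝ), ((A * NormedSpace.exp (u • Q)) i j - (∑ k, A i k) * π j) := by
  simp_rw [Matrix.mul_apply, Finset.sum_mul, ← Finset.sum_sub_distrib, ← mul_sub]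
  rw [integral_finsetSum _ fun k _ => (hDs k j).1.const_mul (A i k)]
  simp_rw [integral_const_mul, (hDs _ j).2]

theorem IsDeviation.mul_eq_of_mul_exp_eq {Q Q' Ds Ds' : Matrix n n ℝ} {π : n → ℝ}
    {A : Matrix m n ℝ} (hDs : IsDeviation Q π Ds) (hDs' : IsDeviation Q' π Ds')
    (hA : ∀ u : ℝ, A * NormedSpace.exp (u • Q) = A * NormedSpace.exp (u • Q')) :
    A * Ds = A * Ds' := by
  ext i j
  simp_rw [hDs.mul_apply, hDs'.mul_apply, hA]

end Deviation

section MTCP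

variable {p : ℕ}

theorem kronA_mul_apply (M : Matrix (Fin p × Fin 2) (Fin p × Fin 2) ℝ) (i : Fin p)
    (jl : Fin p × Fin 2) : (kronA p * M) i jl = ∑ k, M (i, k) jl := by
  simp [Matrix.mul_apply, Fintype.sum_prod_type, kronA, Finset.sum_add_distrib]

theorem mul_kronA_apply (N : Matrix (Fin p) (Fin p) ℝ) (i j : Fin p) (l : Fin 2) :
    (N * kronA p) i (j, l) = N i j := by
  simp [Matrix.mul_apply, kronA]

theorem vecMul_kronA_apply (v : Fin p → ℝ) (j : Fin p) (l : Fin 2) :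
    (v ᵥ* kronA p) (j, l) = v j := by
  simp [Matrix.vecMul, dotProduct, kronA]

theorem piHat_apply (θ : Fin p → ℝ) (j : Fin p) (l : Fin 2) : piHat θ (j, l) = 1 / 2 * θ j := by
  simp [piHat, vecMul_kronA_apply]

theorem kronA_mul_Qbar (G : Matrix (Fin p) (Fin p) ℝ) (lam : Fin p → ℝ) :
    kronA p * Qbar G lam = G * kronA p := by
  ext i ⟨j, l⟩
  rw [kronA_mul_apply, mul_kronA_apply]
  by_cases hij : i = j
  · subst hij; fin_cases l <;> simp [Qbar]
  · fin_cases l <;> simp [Qbar, hij]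

theorem kronA_mul_Qtil (G : Matrix (Fin p) (Fin p) ℝ) (lam : Fin p → ℝ) :
    kronA p * Qtil G lam = G * kronA p := by
  ext i ⟨j, l⟩
  rw [kronA_mul_apply, mul_kronA_apply]
  by_cases hij : i = j
  · subst hij; fin_cases l <;> simp [Qtil]
  · fin_cases l <;> simp [Qtil, hij]

theorem kronA_mul_exp_Qbar_eq_Qtil (G : Matrix (Fin p) (Fin p) ℝ) (lam : Fin p → ℝ) (u : ℝ) :
    kronA p * NormedSpace.exp (u • Qbar G lam) = kronA p * NormedSpace.exp (u • Qtil G lam) := by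
  have hQbar : kronA p * (u • Qbar G lam) = (u • G) * kronA p := by
    rw [Matrix.mul_smul, kronA_mul_Qbar, Matrix.smul_mul]
  have hQtil : kronA p * (u • Qtil G lam) = (u • G) * kronA p := by
    rw [Matrix.mul_smul, kronA_mul_Qtil, Matrix.smul_mul]
  rw [Matrix.mul_exp_eq_exp_mul_of_mul_eq hQbar, Matrix.mul_exp_eq_exp_mul_of_mul_eq hQtil]

theorem piHat_vecMul_Qbar {G : Matrix (Fin p) (Fin p) ℝ} {θ : Fin p → ℝ} (hθ : θ ᵥ* G = 0)
    (lam : Fin p → ℝ) : piHat θ ᵥ* Qbar G lam = 0 := by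
  rw [piHat, smul_vecMul, vecMul_vecMul, kronA_mul_Qbar, ← vecMul_vecMul, hθ, zero_vecMul,
    smul_zero]

theorem piHat_vecMul_Dbar {G : Matrix (Fin p) (Fin p) ℝ} {θ : Fin p → ℝ} (hθ : θ ᵥ* G = 0)
    (lam : Fin p → ℝ) : piHat θ ᵥ* Dbar G lam = ((1 / 2 : ℝ) • (θ * lam)) ᵥ* kronA p := by
  rw [Dbar, vecMul_sub, piHat_vecMul_Qbar hθ, zero_sub]
  ext ⟨j, l⟩
  simp [vecMul_diagonal, piHat_apply, vecMul_kronA_apply, Qbar]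
  ring

theorem piHat_vecMul_Dtil (θ lam : Fin p → ℝ) :
    piHat θ ᵥ* Dtil lam = ((1 / 2 : ℝ) • (θ * lam)) ᵥ* kronA p := by
  ext ⟨j, l⟩
  rw [vecMul_kronA_apply]
  simp [vecMul, dotProduct, Fintype.sum_prod_type, Dtil, piHat_apply]
  fin_cases l <;> simp <;> ring

end MTCP

theorem stmt13_general {p : ℕ} (G : Matrix (Fin p) (Fin p) ℝ) (lam : Fin p → ℝ)
    (θ : Fin p → ℝ) (hθ : IsStationaryDist G θ)
    (DsQb DsQt : Matrix (Fin p × Fin 2) (Fin p × Fin 2) ℝ)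
    (hDsQb : IsDeviation (Qbar G lam) (piHat θ) DsQb)
    (hDsQt : IsDeviation (Qtil G lam) (piHat θ) DsQt) :
    (piHat θ ᵥ* Dbar G lam) ᵥ* DsQb = (piHat θ ᵥ* Dtil lam) ᵥ* DsQt := by
  rw [piHat_vecMul_Dbar hθ.2.2, piHat_vecMul_Dtil, vecMul_vecMul, vecMul_vecMul,
    hDsQb.mul_eq_of_mul_exp_eq hDsQt (kronA_mul_exp_Qbar_eq_Qtil G lam)]

theorem stmt13 {p : ℕ} (G : Matrix (Fin p) (Fin p) ℝ) (lam : Fin p → ℝ)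
    (hG : IsGenerator G) (hirr : IsIrreducibleGen G) (hslow : IsSlow G lam)
    (θ : Fin p → ℝ) (hθ : IsStationaryDist G θ)
    (DsG : Matrix (Fin p) (Fin p) ℝ) (hDsG : IsDeviation G θ DsG)
    (DsQb DsQt : Matrix (Fin p × Fin 2) (Fin p × Fin 2) ℝ)
    (hDsQb : IsDeviation (Qbar G lam) (piHat θ) DsQb)
    (hDsQt : IsDeviation (Qtil G lam) (piHat θ) DsQt) :
    (piHat θ ᵥ* Dbar G lam) ᵥ* DsQb = (piHat θ ᵥ* Dtil lam) ᵥ* DsQt :=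
  stmt13_general G lam θ hθ DsQb DsQt hDsQb hDsQt
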